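/- arXiv:2305.10402 — 8 statements merged into one kernel-verified Lean document; each statement's English description precedes it below -/
import Mathlib

section
/- For all real x with 0 < x < π/2 and all real y ≥ 3, one has 3·sin(x·y) > -y·sin(x). -/
/-!
Put `t = x * y`. If `t ≥ 3π/2`, Jordan's inequality `sin x > 2x/π` gives `y sin x > 2t/π ≥ 3`.
Otherwise, concavity of `sin` on `[0, π]` makes `sin u / u` decreasing, so `x ≤ t/3` gives
`y sin x ≥ 3 sin (t/3)`, and `sin t + sin (t/3) = 2 sin (2t/3) cos (t/3) > 0`.
-/

open Real

lemma mul_sin_le_mul_sin {x b : ℝ} (hx : 0 ≤ x) (hxb : x ≤ b) (hb : b ≤ π) :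
    x * sin b ≤ b * sin x := by
  rcases hxb.eq_or_lt with rfl | hxb
  · rfl
  have hb0 : 0 < b := hx.trans_lt hxb
  have key := strictConcaveOn_sin_Icc.concaveOn.2 ⟨le_rfl, pi_pos.le⟩ ⟨hb0.le, hb⟩
    (sub_nonneg.2 ((div_le_one hb0).2 hxb.le)) (div_nonneg hx hb0.le) (sub_add_cancel 1 _)
  simp only [smul_eq_mul, mul_zero, zero_add, sin_zero, div_mul_cancel₀ x hb0.ne'] at key
  rw [div_mul_eq_mul_div, div_le_iff₀ hb0] at key
  linarith

lemma three_sin_div_three_le_mul_sin {x y : ℝ} (hx : 0 < x) (hy : 3 ≤ y) (hxy : x * y ≤ 3 * π) :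
    3 * sin (x * y / 3) ≤ y * sin x := by
  have := mul_sin_le_mul_sin hx.le (by nlinarith) (by linarith : x * y / 3 ≤ π)
  nlinarith

lemma sin_add_sin_div_three_pos {t : ℝ} (ht : 0 < t) (ht' : t < 3 * π / 2) :
    0 < sin t + sin (t / 3) := by
  rw [sin_add_sin]
  have hs : 0 < sin ((t + t / 3) / 2) := sin_pos_of_pos_of_lt_pi (by linarith) (by linarith)
  have hc : 0 < cos ((t - t / 3) / 2) := cos_pos_of_mem_Ioo ⟨by linarith, by linarith⟩
  positivity

theorem three_sin_mul_gt (x y : ℝ) (hx0 : 0 < x) (hx : x < π / 2) (hy : 3 ≤ y) :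
    3 * Real.sin (x * y) > -y * Real.sin x := by
  rcases lt_or_ge (x * y) (3 * π / 2) with hsmall | hlarge
  · have hpos := sin_add_sin_div_three_pos (mul_pos hx0 (by linarith)) hsmall
    have hconc := three_sin_div_three_le_mul_sin hx0 hy (by linarith [pi_pos])
    linarith
  · have hjordan : 2 / π * x < sin x := mul_lt_sin hx0 hx
    have h3 : 3 ≤ 2 / π * (x * y) := by
      rw [div_mul_eq_mul_div, le_div_iff₀ pi_pos]; linarith
    nlinarith [neg_one_le_sin (x * y)]
end

section
/- For all real x with 0 < x ≤ 2π/17, one has tan(x) < x·(1 + x/(2π)). -/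
open Real

/-!
Bounding `sin x` above by `x - x³ / 6 + x⁵ / 100` and `cos x` below by `1 - x² / 2`
gives `tan x ≤ x + x³ / 3 + O(x⁵)`. On `(0, 3/8] ⊇ (0, 2π/17]` this is below `x + (3/19) x²`, and
`3/19 ≤ 1/(2π)` because `π < 19/6`.
-/

namespace Real

theorem sin_le_of_nonneg_of_le_one {x : ℝ} (h0 : 0 ≤ x) (h1 : x ≤ 1) :
    sin x ≤ x - x ^ 3 / 6 + x ^ 5 / 100 := by
  have h := (abs_le.1 (sin_bound (abs_le.2 ⟨by linarith, h1⟩))).2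
  rw [abs_of_nonneg h0] at h
  linarith

theorem tan_le_of_nonneg_of_le_one {x : ℝ} (h0 : 0 ≤ x) (h1 : x ≤ 1) :
    tan x ≤ (x - x ^ 3 / 6 + x ^ 5 / 100) / (1 - x ^ 2 / 2) := by
  have hsin : 0 ≤ sin x := sin_nonneg_of_nonneg_of_le_pi h0 (h1.trans (by linarith [pi_gt_three]))
  have hcos : 0 < 1 - x ^ 2 / 2 := by nlinarith
  rw [tan_eq_sin_div_cos]
  exact div_le_div₀ (hsin.trans (sin_le_of_nonneg_of_le_one h0 h1))
    (sin_le_of_nonneg_of_le_one h0 h1) hcos one_sub_sq_div_two_le_cos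

theorem tan_lt_add_sq {x : ℝ} (h0 : 0 < x) (h1 : x ≤ 3 / 8) :
    tan x < x + 3 / 19 * x ^ 2 := by
  have hcos : 0 < 1 - x ^ 2 / 2 := by nlinarith
  calc tan x ≤ (x - x ^ 3 / 6 + x ^ 5 / 100) / (1 - x ^ 2 / 2) :=
        tan_le_of_nonneg_of_le_one h0.le (by linarith)
    _ < x + 3 / 19 * x ^ 2 := by
        rw [div_lt_iff₀ hcos]
        have hq : 0 < 3 / 19 - x / 3 - x ^ 2 * (3 / 38) - x ^ 3 / 100 := by nlinarith
        nlinarith [mul_pos (pow_pos h0 2) hq]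

end Real

theorem tan_lt (x : ℝ) (hx0 : 0 < x) (hx : x ≤ 2 * π / 17) :
    Real.tan x < x * (1 + x / (2 * π)) := by
  have hπ : π < 19 / 6 := by linarith [pi_lt_d2]
  have hcoeff : 3 / 19 ≤ 1 / (2 * π) := by
    rw [div_le_div_iff₀ (by norm_num) (by positivity)]
    linarith
  calc tan x < x + 3 / 19 * x ^ 2 := tan_lt_add_sq hx0 (by linarith)
    _ ≤ x + 1 / (2 * π) * x ^ 2 := by gcongr
    _ = x * (1 + x / (2 * π)) := by ring
end

section
/- The sequence u_T := T·sin(2π/(3T+2))/sin(Tπ/(3T+2)) is strictly increasing for integers T ≥ 3. -/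
/-!
With `a = 2π/(3T+2)` one has `Tπ/(3T+2) = (π - a)/3` and `T = 2 · ((π - a)/3) / a`, so
`u_T = 2 · sinc a / sinc ((π - a)/3)`, also at `T = 0` where both sides vanish. Since `sinc` is
strictly decreasing on `[0, π]` (the sine is strictly concave there), this is strictly decreasing
in `a`, and `a` strictly decreases in `T`.
-/

open Real Set

theorem Real.sinc_strictAntiOn : StrictAntiOn sinc (Icc 0 π) := by
  rintro x ⟨hx0, -⟩ y ⟨hy0, hyπ⟩ hxy
  have hy : y ≠ 0 := (hx0.trans_lt hxy).ne'
  rw [sinc_of_ne_zero hy]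
  rcases hx0.eq_or_lt with rfl | hx
  · rw [sinc_zero, div_lt_one (hx0.trans_lt hxy)]
    exact sin_lt (hx0.trans_lt hxy)
  · have hsecant := strictConcaveOn_sin_Icc.secant_strict_mono (left_mem_Icc.2 pi_pos.le)
      ⟨hx.le, hxy.le.trans hyπ⟩ ⟨hy0, hyπ⟩ hx.ne' hy hxy
    simpa [sinc_of_ne_zero hx.ne'] using hsecant

lemma Real.sinc_pi : sinc π = 0 := by
  simp [sinc_of_ne_zero pi_ne_zero]

lemma Real.sinc_pos_of_lt_pi {x : ℝ} (hx0 : 0 ≤ x) (hxπ : x < π) : 0 < sinc x :=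
  sinc_pi ▸ sinc_strictAntiOn ⟨hx0, hxπ.le⟩ ⟨pi_pos.le, le_rfl⟩ hxπ

lemma strictAntiOn_sinc_div_sinc_pi_sub_div_three :
    StrictAntiOn (fun a ↦ sinc a / sinc ((π - a) / 3)) (Icc 0 π) := by
  rintro a ⟨ha0, haπ⟩ b ⟨hb0, hbπ⟩ hab
  have hthird : ∀ c ∈ Icc 0 π, (π - c) / 3 ∈ Icc 0 π := fun c ⟨_, hc⟩ ↦
    ⟨by linarith, by linarith [pi_pos]⟩
  exact div_lt_div₀ (sinc_strictAntiOn ⟨ha0, haπ⟩ ⟨hb0, hbπ⟩ hab)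
    (sinc_strictAntiOn (hthird b ⟨hb0, hbπ⟩) (hthird a ⟨ha0, haπ⟩) (by linarith)).le
    (sinc_pos_of_lt_pi ha0 (hab.trans_le hbπ)).le
    (sinc_pos_of_lt_pi (hthird a ⟨ha0, haπ⟩).1 (by linarith [pi_pos]))

lemma mul_sin_div_sin_eq_sinc_div_sinc {t : ℝ} (ht : 0 ≤ t) :
    t * sin (2 * π / (3 * t + 2)) / sin (t * π / (3 * t + 2)) =
      2 * (sinc (2 * π / (3 * t + 2)) / sinc ((π - 2 * π / (3 * t + 2)) / 3)) := by
  have hthird : (π - 2 * π / (3 * t + 2)) / 3 = t * π / (3 * t + 2) := by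
    field_simp
    ring
  rw [hthird]
  rcases ht.eq_or_lt with rfl | ht
  · simp [sinc_pi]
  · have hden : 0 < 3 * t + 2 := by linarith
    rw [sinc_of_ne_zero (by positivity), sinc_of_ne_zero (by positivity)]
    field_simp

lemma strictMonoOn_mul_sin_div_sin :
    StrictMonoOn (fun t : ℝ ↦ t * sin (2 * π / (3 * t + 2)) / sin (t * π / (3 * t + 2)))
      (Ici 0) := by
  intro t (ht : 0 ≤ t) s (hs : 0 ≤ s) hts
  have hangle : ∀ r : ℝ, 0 ≤ r → 2 * π / (3 * r + 2) ∈ Icc 0 π := fun r hr ↦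
    ⟨by positivity, by rw [div_le_iff₀ (by positivity)]; nlinarith [pi_pos]⟩
  simp only [mul_sin_div_sin_eq_sinc_div_sinc ht, mul_sin_div_sin_eq_sinc_div_sinc hs]
  gcongr 2 * ?_
  exact strictAntiOn_sinc_div_sinc_pi_sub_div_three (hangle s hs) (hangle t ht)
    (div_lt_div_of_pos_left (by positivity) (by positivity) (by linarith))

theorem u_strictMono_general (T S : ℕ) (hTS : T < S) :
    (T : ℝ) * Real.sin (2 * π / (3 * T + 2)) / Real.sin (T * π / (3 * T + 2)) <
      (S : ℝ) * Real.sin (2 * π / (3 * S + 2)) / Real.sin (S * π / (3 * S + 2)) :=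
  strictMonoOn_mul_sin_div_sin (mem_Ici.2 (Nat.cast_nonneg T)) (mem_Ici.2 (Nat.cast_nonneg S))
    (by exact_mod_cast hTS)

theorem u_strictMono (T S : ℕ) (hT : 3 ≤ T) (hTS : T < S) :
    (T : ℝ) * Real.sin (2 * π / (3 * T + 2)) / Real.sin (T * π / (3 * T + 2)) <
      (S : ℝ) * Real.sin (2 * π / (3 * S + 2)) / Real.sin (S * π / (3 * S + 2)) :=
  u_strictMono_general T S hTS
end

section
/- For every integer T ≥ 3, one has u_T := T·sin(2π/(3T+2))/sin(Tπ/(3T+2)) < 2.5. -/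
/-!
The numerator is at most `2πT/(3T+2)` because `sin x < x`. The angle `Tπ/(3T+2)` lies in
`[0, π/3]`, where the concave function `sin` lies above its chord from `0` to `π/3`, so the
denominator is at least `(3T/(3T+2)) · (√3/2)`. Hence `u_T < 4π/(3√3) ≈ 2.418`.
-/

open Real

lemma mul_sin_le_sin_mul {t a : ℝ} (ht₀ : 0 ≤ t) (ht₁ : t ≤ 1) (ha₀ : 0 ≤ a) (ha : a ≤ π) :
    t * sin a ≤ sin (t * a) := by
  simpa using strictConcaveOn_sin_Icc.concaveOn.2 ⟨le_rfl, pi_pos.le⟩ ⟨ha₀, ha⟩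
    (sub_nonneg.2 ht₁) ht₀ (by ring)

lemma mul_sin_div_sin_lt {T : ℝ} (hT : 0 < T) :
    T * sin (2 * π / (3 * T + 2)) / sin (T * π / (3 * T + 2)) < 4 * π / (3 * √3) := by
  have hN : 0 < 3 * T + 2 := by linarith
  have hnum : T * sin (2 * π / (3 * T + 2)) < 2 * π * (T / (3 * T + 2)) := by
    calc T * sin (2 * π / (3 * T + 2)) < T * (2 * π / (3 * T + 2)) :=
          mul_lt_mul_of_pos_left (sin_lt (by positivity)) hT
      _ = 2 * π * (T / (3 * T + 2)) := by ring
  have hden : 3 * √3 / 2 * (T / (3 * T + 2)) ≤ sin (T * π / (3 * T + 2)) := by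
    have hchord := mul_sin_le_sin_mul (t := 3 * T / (3 * T + 2)) (a := π / 3) (by positivity)
      ((div_le_one hN).2 (by linarith)) (by positivity) (by linarith [pi_pos])
    rw [sin_pi_div_three] at hchord
    calc 3 * √3 / 2 * (T / (3 * T + 2)) = 3 * T / (3 * T + 2) * (√3 / 2) := by ring
      _ ≤ sin (3 * T / (3 * T + 2) * (π / 3)) := hchord
      _ = sin (T * π / (3 * T + 2)) := by ring_nf
  have hden_pos : 0 < sin (T * π / (3 * T + 2)) := by
    have : 0 < 3 * √3 / 2 * (T / (3 * T + 2)) := by positivity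
    linarith
  rw [div_lt_div_iff₀ hden_pos (by positivity)]
  calc T * sin (2 * π / (3 * T + 2)) * (3 * √3) < 2 * π * (T / (3 * T + 2)) * (3 * √3) :=
        mul_lt_mul_of_pos_right hnum (by positivity)
    _ = 4 * π * (3 * √3 / 2 * (T / (3 * T + 2))) := by ring
    _ ≤ 4 * π * sin (T * π / (3 * T + 2)) :=
        mul_le_mul_of_nonneg_left hden (by positivity)

lemma four_mul_pi_div_three_mul_sqrt_three_lt : 4 * π / (3 * √3) < 5 / 2 := by
  have hsqrt : 1.7 < √3 := by
    rw [lt_sqrt (by norm_num)]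
    norm_num
  rw [div_lt_iff₀ (by positivity)]
  linarith [pi_lt_d2]

theorem u_lt (T : ℕ) (hT : 3 ≤ T) :
    (T : ℝ) * Real.sin (2 * π / (3 * T + 2)) / Real.sin (T * π / (3 * T + 2)) < 2.5 := by
  have hT_pos : (0 : ℝ) < T := by exact_mod_cast (by omega : 0 < T)
  calc (T : ℝ) * sin (2 * π / (3 * T + 2)) / sin (T * π / (3 * T + 2))
      < 4 * π / (3 * √3) := mul_sin_div_sin_lt hT_pos
    _ < 2.5 := by linarith [four_mul_pi_div_three_mul_sqrt_three_lt]
end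

section
/- The sequence v_T := (T+1)·sin(2π/(3T+2))/sin(Tπ/(3T+2)) is strictly decreasing for integers T ≥ 3. -/
/-!
With `u = Tπ/(3T+2)` and `x = 4π/(3(3T+2))` we have `2π/(3T+2) = π - 3u` and
`2u = (π/6 - x) + π/2`, so `sin 3u = sin u · (1 + 2 cos 2u)` gives
`v_T = (T+1)(1 - 2 sin (π/6 - x)) = (8π/3) · (T+1)/(3T+2) · σ(π/6 - x)`,
where `σ` is the slope of `sin` through `π/6`. As `T ≥ 2` grows, `(T+1)/(3T+2)` strictly
decreases while `π/6 - x` increases inside `[0, π/6)`, where `σ` is positive and, by concavity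
of `sin` on `[0, π]`, antitone.
-/

open Real Set

noncomputable def v (t : ℝ) : ℝ :=
  (t + 1) * sin (2 * π / (3 * t + 2)) / sin (t * π / (3 * t + 2))

lemma sin_three_mul_eq_sin_mul (x : ℝ) : sin (3 * x) = sin x * (1 + 2 * cos (2 * x)) := by
  rw [sin_three_mul, cos_two_mul]
  linear_combination (-4 * sin x) * sin_sq_add_cos_sq x

lemma one_sub_two_mul_sin_pi_div_six_sub (x : ℝ) :
    1 - 2 * sin (π / 6 - x) = 2 * x * slope sin (π / 6) (π / 6 - x) := by
  have h := sub_smul_slope sin (π / 6) (π / 6 - x)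
  rw [sin_pi_div_six, smul_eq_mul, vsub_eq_sub] at h
  linear_combination 2 * h

lemma slope_sin_pi_div_six_pos {y : ℝ} (hy₀ : -(π / 2) ≤ y) (hy : y < π / 6) :
    0 < slope sin (π / 6) y := by
  have hsin : sin y < sin (π / 6) :=
    sin_lt_sin_of_lt_of_le_pi_div_two hy₀ (by linarith [pi_pos]) hy
  rw [slope_def_field]
  exact div_pos_of_neg_of_neg (by linarith) (by linarith)

lemma antitoneOn_slope_sin_pi_div_six : AntitoneOn (slope sin (π / 6)) (Ico 0 (π / 6)) :=
  (strictConcaveOn_sin_Icc.concaveOn.antitoneOn_slope_lt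
    ⟨by positivity, by linarith [pi_pos]⟩).mono
    fun _ ⟨hy₀, hy⟩ ↦ ⟨⟨hy₀, by linarith [pi_pos]⟩, hy⟩

lemma v_eq_mul_slope {t : ℝ} (ht : 0 < t) :
    v t = 8 * π / 3 * ((t + 1) / (3 * t + 2)) *
      slope sin (π / 6) (π / 6 - 4 * π / (3 * (3 * t + 2))) := by
  have hu : sin (t * π / (3 * t + 2)) ≠ 0 := (sin_pos_of_pos_of_lt_pi (by positivity) (by
    rw [div_lt_iff₀ (by positivity)]; nlinarith [pi_pos])).ne'
  have h3u : 2 * π / (3 * t + 2) = π - 3 * (t * π / (3 * t + 2)) := by field_simp; ring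
  have h2u : 2 * (t * π / (3 * t + 2)) = π / 6 - 4 * π / (3 * (3 * t + 2)) + π / 2 := by
    field_simp; ring
  rw [v, h3u, sin_pi_sub, sin_three_mul_eq_sin_mul, mul_div_assoc, mul_div_cancel_left₀ _ hu,
    h2u, cos_add_pi_div_two, mul_neg, ← sub_eq_add_neg, one_sub_two_mul_sin_pi_div_six_sub]
  field_simp
  ring

lemma strictAntiOn_v : StrictAntiOn v (Ici 2) := by
  intro t ht s hs hts
  rw [mem_Ici] at ht hs
  rw [v_eq_mul_slope (by linarith), v_eq_mul_slope (by linarith)]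
  set yt := π / 6 - 4 * π / (3 * (3 * t + 2))
  set ys := π / 6 - 4 * π / (3 * (3 * s + 2))
  have hyt₀ : 0 ≤ yt := by
    rw [sub_nonneg, div_le_div_iff₀ (by positivity) (by norm_num)]
    nlinarith [pi_pos]
  have hyts : yt ≤ ys := by simp only [yt, ys]; gcongr
  have hys : ys < π / 6 := sub_lt_self _ (by positivity)
  have hslope : slope sin (π / 6) ys ≤ slope sin (π / 6) yt :=
    antitoneOn_slope_sin_pi_div_six ⟨hyt₀, hyts.trans_lt hys⟩ ⟨hyt₀.trans hyts, hys⟩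
      hyts
  have hratio : (s + 1) / (3 * s + 2) < (t + 1) / (3 * t + 2) := by
    rw [div_lt_div_iff₀ (by positivity) (by positivity)]; linarith
  have hpos := slope_sin_pi_div_six_pos (by linarith [pi_pos]) hys
  calc _ < 8 * π / 3 * ((t + 1) / (3 * t + 2)) * slope sin (π / 6) ys := by gcongr
    _ ≤ _ := by gcongr

theorem v_strictAnti (T S : ℕ) (hT : 3 ≤ T) (hTS : T < S) :
    ((S : ℝ) + 1) * Real.sin (2 * π / (3 * S + 2)) / Real.sin (S * π / (3 * S + 2)) <
      ((T : ℝ) + 1) * Real.sin (2 * π / (3 * T + 2)) / Real.sin (T * π / (3 * T + 2)) := by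
  have hT₂ : (2 : ℝ) ≤ T := by exact_mod_cast (by omega : 2 ≤ T)
  exact strictAntiOn_v hT₂ (hT₂.trans (by exact_mod_cast hTS.le)) (by exact_mod_cast hTS)
end

section
/- For every integer T ≥ 3, one has v_T := (T+1)·sin(2π/(3T+2))/sin(Tπ/(3T+2)) < 1/0.345 (in particular v_T < 3). -/
/-!
Bound the numerator above by the Taylor polynomial `x - x³/6 + x⁵/100`
and the denominator below by `y - y³/6`. Clearing the common factor `π / (3t+2)⁵` leaves a
polynomial inequality in `t` and `π²`, which holds for all real `t ≥ 3` as soon as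
`3.14 < π < 3.15`; the margin is smallest, about 0.6%, at `t = 3`.
-/

open Real

lemma Real.sin_le_sub_cube_add_quintic {x : ℝ} (hx₀ : 0 ≤ x) (hx₁ : x ≤ 1) :
    sin x ≤ x - x ^ 3 / 6 + x ^ 5 / 100 := by
  have h := (abs_le.1 (sin_bound (abs_le.2 ⟨by linarith, hx₁⟩))).2
  rw [abs_of_nonneg hx₀] at h
  linarith

lemma taylor_poly_lt (t q : ℝ) (ht : 3 ≤ t) (hq₀ : 9.8596 ≤ q) (hq₁ : q ≤ 9.9225) :
    (t + 1) * (2 * (3 * t + 2) ^ 4 - 4 / 3 * q * (3 * t + 2) ^ 2 + 8 / 25 * q ^ 2)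
      < 200 / 69 * (t * (3 * t + 2) ^ 4 - t ^ 3 * q * (3 * t + 2) ^ 2 / 6) := by
  obtain ⟨u, hu, rfl⟩ : ∃ u, 0 ≤ u ∧ t = u + 3 := ⟨t - 3, by linarith, by ring⟩
  have hq₀' := sub_nonneg.2 hq₀
  have hq₁' := sub_nonneg.2 hq₁
  nlinarith [pow_nonneg hu 2, pow_nonneg hu 3, pow_nonneg hu 4, pow_nonneg hu 5,
    mul_nonneg hq₀' hq₁', mul_nonneg hq₀' hu, mul_nonneg hq₁' hu,
    mul_nonneg hq₁' (pow_nonneg hu 2), mul_nonneg hq₁' (pow_nonneg hu 3)]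

lemma sin_ratio_lt (t : ℝ) (ht : 3 ≤ t) :
    (t + 1) * sin (2 * π / (3 * t + 2)) / sin (t * π / (3 * t + 2)) < 200 / 69 := by
  have hs : 0 < 3 * t + 2 := by linarith
  have hπ₀ := pi_gt_d2
  have hπ₁ := pi_lt_d2
  have hy₀ : 0 < t * π / (3 * t + 2) := by positivity
  have hy₁ : t * π / (3 * t + 2) < π := by rw [div_lt_iff₀ hs]; nlinarith
  have hx₁ : 2 * π / (3 * t + 2) ≤ 1 := by rw [div_le_one hs]; linarith
  rw [div_lt_iff₀ (sin_pos_of_pos_of_lt_pi hy₀ hy₁)]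
  calc (t + 1) * sin (2 * π / (3 * t + 2))
      ≤ (t + 1) * (2 * π / (3 * t + 2) - (2 * π / (3 * t + 2)) ^ 3 / 6
          + (2 * π / (3 * t + 2)) ^ 5 / 100) := by
        gcongr
        exact sin_le_sub_cube_add_quintic (by positivity) hx₁
    _ = π / (3 * t + 2) ^ 5 * ((t + 1) * (2 * (3 * t + 2) ^ 4
          - 4 / 3 * π ^ 2 * (3 * t + 2) ^ 2 + 8 / 25 * (π ^ 2) ^ 2)) := by
        field_simp
        ring
    _ < π / (3 * t + 2) ^ 5 * (200 / 69 * (t * (3 * t + 2) ^ 4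
          - t ^ 3 * π ^ 2 * (3 * t + 2) ^ 2 / 6)) := by
        have hq := taylor_poly_lt t (π ^ 2) ht (by nlinarith) (by nlinarith)
        exact mul_lt_mul_of_pos_left hq (by positivity)
    _ = 200 / 69 * (t * π / (3 * t + 2) - (t * π / (3 * t + 2)) ^ 3 / 6) := by
        field_simp
    _ ≤ 200 / 69 * sin (t * π / (3 * t + 2)) := by
        gcongr
        exact sin_ge_sub_cube hy₀.le

theorem v_lt (T : ℕ) (hT : 3 ≤ T) :
    ((T : ℝ) + 1) * Real.sin (2 * π / (3 * T + 2)) / Real.sin (T * π / (3 * T + 2)) < 1 / 0.345 ∧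
    ((T : ℝ) + 1) * Real.sin (2 * π / (3 * T + 2)) / Real.sin (T * π / (3 * T + 2)) < 3 := by
  have h := sin_ratio_lt T (by exact_mod_cast hT)
  exact ⟨h.trans_eq (by norm_num), h.trans (by norm_num)⟩
end

section
/- For every integer T ≥ 1, every root of the derivative of S₄^{(T)}(z) := z + ((2T+1)/(3T+1))·a_T·z^{T+1} + ((T+1)/(3T+1))·a_T·z^{2T+1} + (1/(3T+1))·z^{3T+1} (with a_T = sin(2π/(3T+2))/sin(Tπ/(3T+2))) is a complex number of modulus 1, and all 3T roots are pairwise distinct. -/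
/-!
Put `u = z ^ T` and `b = (T+1)(2T+1) a_T / (3T+1)`. Then
`S' = u³ + b u² + b u + 1 = (u + 1)(u² - (1 - b) u + 1)`, and when `0 < b < 3` the quadratic
factor has two conjugate non-real roots `w`, `w̄` of modulus one. So the roots of `S'` are the
`T`-th roots of the three distinct unit complex numbers `-1, w, w̄`: there are `3T` of them, all
distinct and all on the unit circle. The bound `b < 3` follows from `sin x < x` and Jordan's
inequality once `T ≥ 3`; for `T = 1, 2` one has `a_1 = 2 cos (π/5)` and `a_2 = 1`.
-/

open Real Polynomial ComplexConjugate

section NthRoots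

variable {n : ℕ}

theorem norm_eq_one_of_mem_nthRoots {K : Type*} [NormedField K] {a z : K} (hn : n ≠ 0)
    (ha : ‖a‖ = 1) (hz : z ∈ nthRoots n a) : ‖z‖ = 1 := by
  rw [mem_nthRoots hn.bot_lt] at hz
  rwa [← pow_eq_one_iff_of_nonneg (norm_nonneg z) hn, ← norm_pow, hz]

theorem roots_prod_X_pow_sub_C {K : Type*} [Field K] (hn : n ≠ 0) (s : Multiset K) :
    (s.map fun a => X ^ n - C a).prod.roots = s.bind (nthRoots n) := by
  rw [roots_multiset_prod, Multiset.bind_map]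
  · rfl
  · simp only [Multiset.mem_map, not_exists, not_and]
    exact fun a _ => (monic_X_pow_sub_C a hn).ne_zero

theorem Complex.card_nthRoots (hn : n ≠ 0) (a : ℂ) : Multiset.card (nthRoots n a) = n := by
  classical
  rw [(Complex.isPrimitiveRoot_exp n hn).card_nthRoots,
    if_pos (IsAlgClosed.exists_pow_nat_eq a hn.bot_lt)]

theorem Complex.nthRoots_nodup (hn : n ≠ 0) {a : ℂ} (ha : a ≠ 0) : (nthRoots n a).Nodup :=
  (Complex.isPrimitiveRoot_exp n hn).nthRoots_nodup ha

theorem Complex.card_bind_nthRoots (hn : n ≠ 0) (s : Multiset ℂ) :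
    Multiset.card (s.bind (nthRoots n)) = n * Multiset.card s := by
  simp [Multiset.card_bind, Complex.card_nthRoots hn, mul_comm]

theorem Complex.nodup_bind_nthRoots (hn : n ≠ 0) {s : Multiset ℂ} (hs : s.Nodup)
    (h0 : 0 ∉ s) :
    (s.bind (nthRoots n)).Nodup := by
  refine Multiset.nodup_bind.2
    ⟨fun a ha => Complex.nthRoots_nodup hn (ne_of_mem_of_not_mem ha h0), ?_⟩
  refine hs.pairwise fun a _ b _ hab => Multiset.disjoint_left.2 fun {z} hza hzb => hab ?_
  rw [mem_nthRoots hn.bot_lt] at hza hzb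
  rw [← hza, hzb]

end NthRoots

theorem prod_X_pow_sub_C_neg_one_self_conj (n : ℕ) {w : ℂ} (hw : ‖w‖ = 1) :
    (({-1, w, conj w} : Multiset ℂ).map fun u => X ^ n - C u).prod =
      X ^ (3 * n) + C (1 - 2 * w.re : ℂ) * X ^ (2 * n) + C (1 - 2 * w.re : ℂ) * X ^ n + 1 := by
  have hsum : C w + C (conj w) = C (2 * w.re : ℂ) := by
    rw [← C_add, Complex.add_conj]; push_cast; rfl
  have hprod : C w * C (conj w) = 1 := by
    rw [← C_mul, Complex.mul_conj, Complex.normSq_eq_norm_sq, hw]; simp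
  simp only [Multiset.insert_eq_cons, Multiset.map_cons, Multiset.prod_cons, Multiset.map_singleton,
    Multiset.prod_singleton, C_neg, C_1, C_sub]
  rw [show 3 * n = n * 3 by ring, show 2 * n = n * 2 by ring, pow_mul, pow_mul]
  linear_combination (-(X ^ n : ℂ[X]) ^ 2 - X ^ n) * hsum + (X ^ n + 1) * hprod

theorem Complex.exists_norm_eq_one_re_eq {x : ℝ} (hx : |x| < 1) :
    ∃ w : ℂ, ‖w‖ = 1 ∧ w.re = x ∧ 0 < w.im := by
  obtain ⟨hx₁, hx₂⟩ := abs_lt.1 hx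
  refine ⟨Complex.exp (arccos x * Complex.I), Complex.norm_exp_ofReal_mul_I _, ?_, ?_⟩
  · rw [Complex.exp_ofReal_mul_I_re, cos_arccos hx₁.le hx₂.le]
  · rw [Complex.exp_ofReal_mul_I_im]
    exact sin_pos_of_pos_of_lt_pi (arccos_pos.2 hx₂) (arccos_lt_pi.2 hx₁)

theorem nodup_neg_one_self_conj {w : ℂ} (hw : 0 < w.im) :
    ({-1, w, conj w} : Multiset ℂ).Nodup := by
  have h1 : (-1 : ℂ) ≠ w := fun h => by simp [← h] at hw
  have h2 : (-1 : ℂ) ≠ conj w := fun h => by simp [Complex.ext_iff] at h; linarith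
  have h3 : w ≠ conj w := fun h => by simp [Complex.ext_iff] at h; linarith
  simp [h1, h2, h3]

noncomputable def aCoeff (T : ℕ) : ℝ :=
  Real.sin (2 * π / (3 * T + 2)) / Real.sin (T * π / (3 * T + 2))

theorem aCoeff_pos {T : ℕ} (hT : T ≠ 0) : 0 < aCoeff T := by
  have hT' : (0 : ℝ) < T := by positivity
  have hd : (0 : ℝ) < 3 * T + 2 := by positivity
  refine div_pos (sin_pos_of_pos_of_lt_pi (by positivity) ?_)
    (sin_pos_of_pos_of_lt_pi (by positivity) ?_) <;>
  · rw [div_lt_iff₀ hd]; nlinarith [pi_pos]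

theorem aCoeff_one : aCoeff 1 = 2 * Real.cos (π / 5) := by
  have hs : Real.sin (π / 5) ≠ 0 :=
    (sin_pos_of_pos_of_lt_pi (by positivity) (by linarith [pi_pos])).ne'
  rw [aCoeff, Nat.cast_one, one_mul, show (3 * 1 + 2 : ℝ) = 5 by norm_num,
    show 2 * π / 5 = 2 * (π / 5) by ring, sin_two_mul]
  field_simp

theorem aCoeff_one_lt_two : aCoeff 1 < 2 := by
  have hc : Real.cos (π / 5) < Real.cos 0 :=
    cos_lt_cos_of_nonneg_of_le_pi le_rfl (by linarith [pi_pos]) (by positivity)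
  rw [aCoeff_one]
  linarith [cos_zero]

theorem aCoeff_two : aCoeff 2 = 1 := by
  rw [aCoeff, div_eq_one_iff_eq]
  · norm_num
  · norm_num
    exact (sin_pos_of_pos_of_lt_pi (by positivity) (by linarith [pi_pos])).ne'

theorem aCoeff_lt_pi_div {T : ℕ} (hT : T ≠ 0) : aCoeff T < π / T := by
  have hT' : (0 : ℝ) < T := by positivity
  have hd : (0 : ℝ) < 3 * T + 2 := by positivity
  have hjordan : 2 * T / (3 * T + 2) ≤ Real.sin (T * π / (3 * T + 2)) := by
    convert mul_le_sin (x := T * π / (3 * T + 2)) (by positivity) ?_ using 1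
    · field_simp
    · rw [div_le_iff₀ hd]; nlinarith [pi_pos]
  calc aCoeff T < (2 * π / (3 * T + 2)) / (2 * T / (3 * T + 2)) :=
        div_lt_div₀ (sin_lt (by positivity)) hjordan (by positivity) (by positivity)
    _ = π / T := by field_simp

theorem mul_aCoeff_lt_three {T : ℕ} (hT : T ≠ 0) :
    ((T : ℝ) + 1) * (2 * T + 1) / (3 * T + 1) * aCoeff T < 3 := by
  obtain rfl | rfl | hT3 : T = 1 ∨ T = 2 ∨ 3 ≤ T := by omega
  · push_cast; linarith [aCoeff_one_lt_two]
  · norm_num [aCoeff_two]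
  · have hT3' : (3 : ℝ) ≤ T := by exact_mod_cast hT3
    have hc : (0 : ℝ) < (T + 1) * (2 * T + 1) / (3 * T + 1) := by positivity
    calc ((T : ℝ) + 1) * (2 * T + 1) / (3 * T + 1) * aCoeff T
        < (T + 1) * (2 * T + 1) / (3 * T + 1) * (π / T) :=
          mul_lt_mul_of_pos_left (aCoeff_lt_pi_div hT) hc
      _ ≤ 3 := by
        rw [div_mul_div_comm, div_le_iff₀ (by positivity)]
        have hA : (0 : ℝ) ≤ (T + 1) * (2 * T + 1) := by positivity
        nlinarith [mul_le_mul_of_nonneg_right pi_lt_d2.le hA]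

theorem derivative_S4 (T : ℕ) (a : ℂ) :
    derivative (X + C ((2 * (T : ℂ) + 1) / (3 * T + 1) * a) * X ^ (T + 1) +
        C (((T : ℂ) + 1) / (3 * T + 1) * a) * X ^ (2 * T + 1) +
        C (1 / (3 * (T : ℂ) + 1)) * X ^ (3 * T + 1)) =
      X ^ (3 * T) + C ((T + 1) * (2 * T + 1) / (3 * T + 1) * a) * X ^ (2 * T) +
        C ((T + 1) * (2 * T + 1) / (3 * T + 1) * a) * X ^ T + 1 := by
  have hT : (3 * (T : ℂ) + 1) ≠ 0 := by exact_mod_cast (3 * T).succ_ne_zero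
  simp only [derivative_add, derivative_C_mul, derivative_X_pow, derivative_X, Nat.add_sub_cancel,
    ← mul_assoc, ← C_mul]
  push_cast
  rw [one_div_mul_cancel hT, C_1]
  ring_nf

theorem deriv_roots_on_circle (T : ℕ) (hT : 1 ≤ T) :
    let aT : ℝ := Real.sin (2 * π / (3 * T + 2)) / Real.sin (T * π / (3 * T + 2))
    let S : Polynomial ℂ :=
      X + C (((2 * (T : ℂ) + 1) / (3 * T + 1)) * (aT : ℂ)) * X ^ (T + 1) +
        C ((((T : ℂ) + 1) / (3 * T + 1)) * (aT : ℂ)) * X ^ (2 * T + 1) +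
        C (1 / (3 * (T : ℂ) + 1)) * X ^ (3 * T + 1)
    (∀ z ∈ (derivative S).roots, ‖z‖ = 1) ∧
      (derivative S).roots.Nodup ∧ Multiset.card (derivative S).roots = 3 * T := by
  intro aT S
  have hT0 : T ≠ 0 := by omega
  set b : ℝ := (T + 1) * (2 * T + 1) / (3 * T + 1) * aCoeff T
  have hb : |(1 - b) / 2| < 1 := by
    have hb0 : 0 < b := mul_pos (by positivity) (aCoeff_pos hT0)
    exact abs_lt.2 ⟨by linarith [mul_aCoeff_lt_three hT0], by linarith⟩
  obtain ⟨w, hw, hwre, hwim⟩ := Complex.exists_norm_eq_one_re_eq hb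
  set s : Multiset ℂ := {-1, w, conj w}
  have hunit : ∀ u ∈ s, ‖u‖ = 1 := by
    simp only [s, Multiset.insert_eq_cons, Multiset.mem_cons, Multiset.mem_singleton]
    rintro u (rfl | rfl | rfl) <;> simp [hw]
  have hS : derivative S = (s.map fun u => X ^ T - C u).prod := by
    rw [prod_X_pow_sub_C_neg_one_self_conj T hw, hwre, derivative_S4]
    simp only [b, aT, aCoeff]
    push_cast
    ring_nf
  rw [hS, roots_prod_X_pow_sub_C hT0]
  refine ⟨fun z hz => ?_, ?_, ?_⟩
  · obtain ⟨u, hu, hz⟩ := Multiset.mem_bind.1 hz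
    exact norm_eq_one_of_mem_nthRoots hT0 (hunit u hu) hz
  · exact Complex.nodup_bind_nthRoots hT0 (nodup_neg_one_self_conj hwim)
      fun h0 => by simpa using hunit 0 h0
  · rw [Complex.card_bind_nthRoots hT0]
    simp [s, mul_comm]
end

section
/- For complex numbers x, y on the unit circle with x ≠ y, writing x = e^{iX}, y = e^{iY}, γ = (X−Y)/2, w = e^{iT(X+Y)/2}, the difference quotient (S₄^{(T)}(x) − S₄^{(T)}(y))/(x − y) equals 1 + ((2T+1)/(3T+1))·(sin((T+1)γ)/sin γ)·a_T·w + ((T+1)/(3T+1))·(sin((2T+1)γ)/sin γ)·a_T·w² + (sin((3T+1)γ)/((3T+1)·sin γ))·w³, provided sin γ ≠ 0. -/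
/-! Factoring out the midpoint, `e^{inX} - e^{inY} = 2i sin(nγ) u^n` with `u = e^{i(X+Y)/2}`,
so each monomial `z^{m+1}` of `S₄^{(T)}` has difference quotient `sin((m+1)γ)/sin γ · u^m`,
and `u^T = w`. -/

open Real Complex

theorem Complex.exp_I_mul_sub_exp_I_mul (z w : ℂ) :
    exp (I * z) - exp (I * w) = 2 * I * sin ((z - w) / 2) * exp (I * (z + w) / 2) := by
  have hz : exp (I * z) = exp ((z - w) / 2 * I) * exp (I * (z + w) / 2) := by
    rw [← exp_add]; ring_nf
  have hw : exp (I * w) = exp (-((z - w) / 2) * I) * exp (I * (z + w) / 2) := by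
    rw [← exp_add]; ring_nf
  rw [hz, hw]
  linear_combination (-I * exp (I * (z + w) / 2)) * two_sin ((z - w) / 2) +
    ((exp ((z - w) / 2 * I) - exp (-((z - w) / 2) * I)) * exp (I * (z + w) / 2)) * I_sq

theorem Complex.exp_I_mul_pow_sub_exp_I_mul_pow (z w : ℂ) (n : ℕ) :
    exp (I * z) ^ n - exp (I * w) ^ n =
      2 * I * sin (n * ((z - w) / 2)) * exp (I * (z + w) / 2) ^ n := by
  rw [← exp_nat_mul, ← exp_nat_mul, ← exp_nat_mul, mul_left_comm, mul_left_comm (n : ℂ),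
    exp_I_mul_sub_exp_I_mul]
  ring_nf

theorem Complex.exp_I_mul_pow_succ_sub_div (z w : ℂ) (h : sin ((z - w) / 2) ≠ 0) (m : ℕ) :
    (exp (I * z) ^ (m + 1) - exp (I * w) ^ (m + 1)) / (exp (I * z) - exp (I * w)) =
      sin ((m + 1) * ((z - w) / 2)) / sin ((z - w) / 2) * exp (I * (z + w) / 2) ^ m := by
  rw [exp_I_mul_sub_exp_I_mul, exp_I_mul_pow_sub_exp_I_mul_pow]
  push_cast
  field_simp
  ring

theorem difference_quotient_formula_general (T : ℕ) (X Y : ℝ)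
    (hXY : Real.sin ((X - Y) / 2) ≠ 0) :
    let aT : ℝ := Real.sin (2 * π / (3 * T + 2)) / Real.sin (T * π / (3 * T + 2))
    let S : ℂ → ℂ := fun z =>
      z + ((2 * (T : ℂ) + 1) / (3 * T + 1)) * (aT : ℂ) * z ^ (T + 1) +
        (((T : ℂ) + 1) / (3 * T + 1)) * (aT : ℂ) * z ^ (2 * T + 1) +
        (1 / (3 * (T : ℂ) + 1)) * z ^ (3 * T + 1)
    let γ : ℝ := (X - Y) / 2
    let w : ℂ := Complex.exp (Complex.I * T * (X + Y) / 2)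
    (S (Complex.exp (Complex.I * X)) - S (Complex.exp (Complex.I * Y))) /
        (Complex.exp (Complex.I * X) - Complex.exp (Complex.I * Y)) =
      1 + ((2 * (T : ℂ) + 1) / (3 * T + 1)) *
            ((Real.sin ((T + 1) * γ) / Real.sin γ : ℝ) : ℂ) * (aT : ℂ) * w +
        (((T : ℂ) + 1) / (3 * T + 1)) *
            ((Real.sin ((2 * T + 1) * γ) / Real.sin γ : ℝ) : ℂ) * (aT : ℂ) * w ^ 2 +
        ((Real.sin ((3 * T + 1) * γ) / ((3 * T + 1) * Real.sin γ) : ℝ) : ℂ) * w ^ 3 := by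
  intro aT S γ w
  set x := exp (I * X)
  set y := exp (I * Y)
  have hsin : sin (((X : ℂ) - Y) / 2) ≠ 0 := by exact_mod_cast hXY
  have hxy : x - y ≠ 0 := by
    rw [exp_I_mul_sub_exp_I_mul]
    exact mul_ne_zero (mul_ne_zero (mul_ne_zero two_ne_zero I_ne_zero) hsin) (exp_ne_zero _)
  have hw : w = exp (I * (X + Y) / 2) ^ T := by
    simp only [w]
    rw [← Complex.exp_nat_mul]; ring_nf
  have hquot := exp_I_mul_pow_succ_sub_div X Y hsin
  calc (S x - S y) / (x - y)
      = 1 + ((2 * (T : ℂ) + 1) / (3 * T + 1)) * aT * ((x ^ (T + 1) - y ^ (T + 1)) / (x - y)) +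
          (((T : ℂ) + 1) / (3 * T + 1)) * aT * ((x ^ (2 * T + 1) - y ^ (2 * T + 1)) / (x - y)) +
          1 / (3 * (T : ℂ) + 1) * ((x ^ (3 * T + 1) - y ^ (3 * T + 1)) / (x - y)) := by
        simp only [S]; field_simp; ring
    _ = _ := by
        rw [hquot, hquot, hquot, hw, ← pow_mul, ← pow_mul]
        simp only [γ]
        push_cast
        rw [div_mul_eq_div_div]
        ring

theorem difference_quotient_formula (T : ℕ) (hT : 1 ≤ T) (X Y : ℝ)
    (hXY : Real.sin ((X - Y) / 2) ≠ 0) :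
    let aT : ℝ := Real.sin (2 * π / (3 * T + 2)) / Real.sin (T * π / (3 * T + 2))
    let S : ℂ → ℂ := fun z =>
      z + ((2 * (T : ℂ) + 1) / (3 * T + 1)) * (aT : ℂ) * z ^ (T + 1) +
        (((T : ℂ) + 1) / (3 * T + 1)) * (aT : ℂ) * z ^ (2 * T + 1) +
        (1 / (3 * (T : ℂ) + 1)) * z ^ (3 * T + 1)
    let γ : ℝ := (X - Y) / 2
    let w : ℂ := Complex.exp (Complex.I * T * (X + Y) / 2)
    (S (Complex.exp (Complex.I * X)) - S (Complex.exp (Complex.I * Y))) /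
        (Complex.exp (Complex.I * X) - Complex.exp (Complex.I * Y)) =
      1 + ((2 * (T : ℂ) + 1) / (3 * T + 1)) *
            ((Real.sin ((T + 1) * γ) / Real.sin γ : ℝ) : ℂ) * (aT : ℂ) * w +
        (((T : ℂ) + 1) / (3 * T + 1)) *
            ((Real.sin ((2 * T + 1) * γ) / Real.sin γ : ℝ) : ℂ) * (aT : ℂ) * w ^ 2 +
        ((Real.sin ((3 * T + 1) * γ) / ((3 * T + 1) * Real.sin γ) : ℝ) : ℂ) * w ^ 3 :=
  difference_quotient_formula_general T X Y hXY
end
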